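/- arXiv:1412.8721 — 2 statements merged into one kernel-verified Lean document; each statement's English description precedes it below -/
import Mathlib

section
/- For 1 ≤ k ≤ n, G_{a,b}(n,k;r) = Σ_{i=k}^{n} G_{a,b}(i−1,k−1;r) · ∏_{j=i}^{n−1}(a·j + b·k + (a+b)·r). -/
/-!
For fixed `k = m + 1` the defining recurrence `G(n+1, k) = G(n, k-1) + c_n G(n, k)`, with
`c_n = a n + b k + (a+b) r`, is a first-order linear recurrence in `n` driven by column `k - 1`.
Unrolling it from `n = m`, where `G(m, k) = 0`, gives the stated sum.
-/

open Finset

/-- The generalized r-Lah numbers `G_{a,b}(n,k;r)`. -/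
def genLah {R : Type*} [CommRing R] (a b : R) (r : ℕ) : ℕ → ℕ → R
  | 0, 0 => 1
  | 0, _ + 1 => 0
  | n + 1, 0 => (a * ((n : R) + (r : R)) + b * (r : R)) * genLah a b r n 0
  | n + 1, k + 1 => genLah a b r n k +
      (a * (n : R) + b * ((k : R) + 1) + (a + b) * (r : R)) * genLah a b r n (k + 1)

theorem eq_mul_prod_add_sum_of_succ_eq_add_mul {M : Type*} [CommSemiring M] {x y c : ℕ → M}
    (hrec : ∀ n, x (n + 1) = y (n + 1) + c n * x n) {m n : ℕ} (hmn : m ≤ n) :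
    x n = x m * ∏ j ∈ Ico m n, c j + ∑ i ∈ Ioc m n, y i * ∏ j ∈ Ico i n, c j := by
  induction n, hmn using Nat.le_induction with
  | base => simp
  | succ n hmn ih =>
    have hterm : ∀ i ∈ Ioc m n,
        y i * ∏ j ∈ Ico i (n + 1), c j = y i * (∏ j ∈ Ico i n, c j) * c n := fun i hi => by
      rw [prod_Ico_succ_top (mem_Ioc.mp hi).2, mul_assoc]
    rw [hrec, ih, sum_Ioc_succ_top hmn, prod_Ico_succ_top hmn, sum_congr rfl hterm, ← sum_mul,
      Ico_self, prod_empty]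
    ring

theorem genLah_eq_zero_of_lt {R : Type*} [CommRing R] (a b : R) (r : ℕ) {n k : ℕ} (h : n < k) :
    genLah a b r n k = 0 := by
  induction n generalizing k with
  | zero => obtain ⟨k, rfl⟩ := Nat.exists_eq_add_one_of_ne_zero h.ne'; rfl
  | succ n ih =>
    obtain ⟨k, rfl⟩ := Nat.exists_eq_add_one_of_ne_zero (Nat.ne_zero_of_lt h)
    rw [genLah, ih (by omega), ih (by omega), mul_zero, add_zero]

theorem genLah_vertical_recurrence_general {R : Type*} [CommRing R] (a b : R) (r n k : ℕ)
    (hk : 1 ≤ k) :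
    genLah a b r n k =
      ∑ i ∈ Icc k n, genLah a b r (i - 1) (k - 1) *
        ∏ j ∈ Ico i n, (a * (j : R) + b * (k : R) + (a + b) * (r : R)) := by
  obtain ⟨m, rfl⟩ := Nat.exists_eq_add_one_of_ne_zero (Nat.one_le_iff_ne_zero.mp hk)
  rcases lt_or_ge n (m + 1) with hnm | hmn
  · rw [genLah_eq_zero_of_lt a b r hnm, Icc_eq_empty_of_lt hnm, sum_empty]
  have hrec : ∀ i, genLah a b r (i + 1) (m + 1) = genLah a b r (i + 1 - 1) m +
      (a * (i : R) + b * ((m + 1 : ℕ) : R) + (a + b) * (r : R)) * genLah a b r i (m + 1) := by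
    intro i
    rw [genLah, Nat.add_sub_cancel, Nat.cast_succ]
  rw [eq_mul_prod_add_sum_of_succ_eq_add_mul (x := fun n => genLah a b r n (m + 1))
      (y := fun i => genLah a b r (i - 1) m) hrec (Nat.le_of_succ_le hmn),
    genLah_eq_zero_of_lt a b r (Nat.lt_succ_self m), zero_mul, zero_add, Icc_add_one_left_eq_Ioc,
    Nat.add_sub_cancel]

theorem genLah_vertical_recurrence {R : Type*} [CommRing R] (a b : R) (r n k : ℕ)
    (hk : 1 ≤ k) (hkn : k ≤ n) :
    genLah a b r n k =
      ∑ i ∈ Icc k n, genLah a b r (i - 1) (k - 1) *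
        ∏ j ∈ Ico i n, (a * (j : R) + b * (k : R) + (a + b) * (r : R)) :=
  genLah_vertical_recurrence_general a b r n k hk
end

section
/- For 0 ≤ k < n, G_{a,b}(n,k;r) = Σ_{i=0}^{k} (a·(n+r−i−1) + b·(k+r−i)) · G_{a,b}(n−i−1,k−i;r). -/
/- Unfolding the two-term recurrence repeatedly along the diagonal: the `i = 0` term of the sum is
the second summand of the recurrence, and the remaining terms are the first summand expanded by
induction on `k`. -/

open Finset

section

variable {R : Type*} [CommRing R] (a b : R) (r : ℕ)

theorem genLah_succ_zero (n : ℕ) :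
    genLah a b r (n + 1) 0 = (a * ((n : R) + r) + b * r) * genLah a b r n 0 := rfl

theorem genLah_succ_succ (n k : ℕ) :
    genLah a b r (n + 1) (k + 1) = genLah a b r n k +
      (a * (n : R) + b * ((k : R) + 1) + (a + b) * r) * genLah a b r n (k + 1) := rfl

theorem genLah_succ_eq_sum {n k : ℕ} (hkn : k ≤ n) :
    genLah a b r (n + 1) k =
      ∑ i ∈ range (k + 1),
        (a * ((n : R) + r - i) + b * ((k : R) + r - i)) * genLah a b r (n - i) (k - i) := by
  induction k generalizing n with
  | zero =>
    rw [genLah_succ_zero, sum_range_one, Nat.sub_zero]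
    push_cast
    ring
  | succ k ih =>
    obtain ⟨m, rfl⟩ : ∃ m, n = m + 1 := ⟨n - 1, by omega⟩
    rw [genLah_succ_succ, ih (by omega), sum_range_succ' _ (k + 1)]
    congr 1
    · refine sum_congr rfl fun i _ => ?_
      rw [Nat.add_sub_add_right, Nat.add_sub_add_right]
      push_cast
      ring
    · push_cast
      ring

end

theorem genLah_diagonal_recurrence {R : Type*} [CommRing R] (a b : R) (r n k : ℕ)
    (hkn : k < n) :
    genLah a b r n k =
      ∑ i ∈ range (k + 1),
        (a * ((n : R) + (r : R) - (i : R) - 1) + b * ((k : R) + (r : R) - (i : R))) *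
          genLah a b r (n - i - 1) (k - i) := by
  obtain ⟨m, rfl⟩ : ∃ m, n = m + 1 := ⟨n - 1, by omega⟩
  rw [genLah_succ_eq_sum a b r (Nat.lt_succ_iff.mp hkn)]
  refine sum_congr rfl fun i _ => ?_
  rw [Nat.sub_right_comm, Nat.add_sub_cancel]
  push_cast
  ring
end
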